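/- arXiv:1404.6677 — 3 statements merged into one kernel-verified Lean document; each statement's English description precedes it below -/
import Mathlib

section
/- Let G = (V,E) be a finite connected bipartite simple graph. Then there is no fully supported probability measure μ on V satisfying NCOND, i.e., such that for every facet F of G, μ(F) < μ(E(F)). -/
/-! Color the bipartite graph with two colors. Each nonempty color class is a facet whose
neighbourhood lies in the other class, so NCOND makes the mass of each nonempty class strictly
smaller than the mass of the other. An empty class has mass `0`, so the two masses are
comparable both ways, and any vertex makes one of the comparisons strict. -/

open Finset

def nbhd {V : Type*} [Fintype V] [DecidableEq V] (G : SimpleGraph V) [DecidableRel G.Adj]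
    (U : Finset V) : Finset V :=
  U.biUnion fun u => G.neighborFinset u

def IsFacet {V : Type*} (G : SimpleGraph V) (F : Finset V) : Prop :=
  F.Nonempty ∧ ∀ u ∈ F, ∀ v ∈ F, ¬ G.Adj u v

namespace SimpleGraph

variable {V : Type*} [Fintype V] {G : SimpleGraph V}

namespace Coloring

variable {α : Type*} [DecidableEq α]

def colorFinset (C : G.Coloring α) (i : α) : Finset V :=
  univ.filter (C · = i)

@[simp]
lemma mem_colorFinset {C : G.Coloring α} {i : α} {v : V} : v ∈ C.colorFinset i ↔ C v = i := by
  simp [colorFinset]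

lemma isFacet_colorFinset (C : G.Coloring α) {i : α} (hne : (C.colorFinset i).Nonempty) :
    IsFacet G (C.colorFinset i) := by
  refine ⟨hne, fun u hu v hv hadj => C.valid hadj ?_⟩
  rw [mem_colorFinset] at hu hv
  rw [hu, hv]

end Coloring

variable [DecidableEq V] [DecidableRel G.Adj]

lemma mem_nbhd {U : Finset V} {v : V} : v ∈ nbhd G U ↔ ∃ u ∈ U, G.Adj u v := by
  simp [nbhd]

variable (G) in
def SatisfiesNCond (μ : V → ℝ) : Prop :=
  ∀ F : Finset V, IsFacet G F → ∑ v ∈ F, μ v < ∑ v ∈ nbhd G F, μ v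

lemma SatisfiesNCond.sum_lt_of_nbhd_subset {μ : V → ℝ} (hμ : SatisfiesNCond G μ)
    (hpos : ∀ v, 0 ≤ μ v) {F B : Finset V} (hF : IsFacet G F) (hFB : nbhd G F ⊆ B) :
    ∑ v ∈ F, μ v < ∑ v ∈ B, μ v :=
  (hμ F hF).trans_le (sum_le_sum_of_subset_of_nonneg hFB fun v _ _ => hpos v)

namespace Coloring

lemma nbhd_colorFinset_subset (C : G.Coloring (Fin 2)) {i j : Fin 2} (hij : i ≠ j) :
    nbhd G (C.colorFinset i) ⊆ C.colorFinset j := by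
  intro v hv
  obtain ⟨u, hu, hadj⟩ := mem_nbhd.1 hv
  have hcolor := C.valid hadj
  rw [mem_colorFinset] at hu ⊢
  omega

lemma sum_colorFinset_lt {μ : V → ℝ} (hμ : SatisfiesNCond G μ) (hpos : ∀ v, 0 ≤ μ v)
    (C : G.Coloring (Fin 2)) {i j : Fin 2} (hij : i ≠ j) (hne : (C.colorFinset i).Nonempty) :
    ∑ v ∈ C.colorFinset i, μ v < ∑ v ∈ C.colorFinset j, μ v :=
  hμ.sum_lt_of_nbhd_subset hpos (C.isFacet_colorFinset hne) (C.nbhd_colorFinset_subset hij)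

lemma sum_colorFinset_le {μ : V → ℝ} (hμ : SatisfiesNCond G μ) (hpos : ∀ v, 0 ≤ μ v)
    (C : G.Coloring (Fin 2)) {i j : Fin 2} (hij : i ≠ j) :
    ∑ v ∈ C.colorFinset i, μ v ≤ ∑ v ∈ C.colorFinset j, μ v := by
  rcases (C.colorFinset i).eq_empty_or_nonempty with hempty | hne
  · rw [hempty, sum_empty]
    exact sum_nonneg fun v _ => hpos v
  · exact (sum_colorFinset_lt hμ hpos C hij hne).le

end Coloring

end SimpleGraph

open SimpleGraph

theorem stmt_6_general {V : Type*} [Fintype V] [DecidableEq V] (G : SimpleGraph V)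
    [DecidableRel G.Adj] (hbip : G.Colorable 2) :
    ¬ ∃ μ : V → ℝ, (∀ v, 0 < μ v) ∧ (∑ v, μ v = 1) ∧
      ∀ F : Finset V, IsFacet G F → ∑ v ∈ F, μ v < ∑ v ∈ nbhd G F, μ v := by
  rintro ⟨μ, hpos, hsum, hμ⟩
  obtain ⟨C⟩ := hbip
  obtain ⟨v, -, -⟩ := exists_ne_zero_of_sum_ne_zero (hsum.trans_ne one_ne_zero)
  have hnonneg : ∀ v, 0 ≤ μ v := fun v => (hpos v).le
  have hne : (C.colorFinset (C v)).Nonempty := ⟨v, Coloring.mem_colorFinset.2 rfl⟩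
  obtain ⟨j, hj⟩ : ∃ j, C v ≠ j := ⟨C v + 1, by simp⟩
  exact (Coloring.sum_colorFinset_lt hμ hnonneg C hj hne).not_ge
    (Coloring.sum_colorFinset_le hμ hnonneg C hj.symm)

theorem stmt_6 {V : Type*} [Fintype V] [DecidableEq V] (G : SimpleGraph V)
    [DecidableRel G.Adj] (hconn : G.Connected) (hbip : G.Colorable 2) :
    ¬ ∃ μ : V → ℝ, (∀ v, 0 < μ v) ∧ (∑ v, μ v = 1) ∧
      ∀ F : Finset V, IsFacet G F → ∑ v ∈ F, μ v < ∑ v ∈ nbhd G F, μ v :=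
  stmt_6_general G hbip
end

section
/- Let G = (V,E) be a finite connected simple graph with at least 2 vertices. Then G is non-bipartite if and only if there exists a fully supported probability measure μ on V such that for every facet F of G, μ(F) < μ(E(F)). -/
/-!
Weighting each vertex by its degree, `μ(F)` counts the edges leaving an independent set `F`, all
of which land in `E(F)`, so `μ(F) ≤ μ(E(F))`. Equality forces every neighbour of `E(F)` back into
`F`; by connectivity `F` and its complement then form a bipartition. Conversely, a colour class
`A` of a 2-colouring and its complement are both independent with `E(A) ⊆ Aᶜ` and `E(Aᶜ) ⊆ A`,
so the strict inequalities for `A` and `Aᶜ` would chain into `μ(A) < μ(A)`.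
-/

open Finset

namespace SimpleGraph

theorem Reachable.mem_of_adj_closed {V : Type*} {G : SimpleGraph V} {a b : V}
    (h : G.Reachable a b) {S : Set V} (ha : a ∈ S) (hS : ∀ x ∈ S, ∀ y, G.Adj x y → y ∈ S) :
    b ∈ S := by
  rw [reachable_iff_reflTransGen] at h
  induction h with
  | refl => exact ha
  | tail _ hadj ih => exact hS _ ih _ hadj

end SimpleGraph

section Nbhd

variable {V : Type*} [Fintype V] {G : SimpleGraph V} [DecidableRel G.Adj] {U : Finset V}

theorem filter_adj_subset_neighborFinset (u : V) :
    {v ∈ U | G.Adj v u} ⊆ G.neighborFinset u := fun v hv => by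
  simpa [SimpleGraph.adj_comm] using (mem_filter.mp hv).2

variable [DecidableEq V]

@[simp]
theorem mem_nbhd {v : V} : v ∈ nbhd G U ↔ ∃ u ∈ U, G.Adj u v := by
  simp [nbhd]

theorem nbhd_subset_compl (hU : ∀ u ∈ U, ∀ v ∈ U, ¬G.Adj u v) : nbhd G U ⊆ Uᶜ := by
  intro v hv
  obtain ⟨u, hu, huv⟩ := mem_nbhd.mp hv
  exact mem_compl.mpr fun hvU => hU u hu v hvU huv

theorem sum_degree_eq_sum_card_filter_adj (U : Finset V) :
    ∑ v ∈ U, G.degree v = ∑ u ∈ nbhd G U, #{v ∈ U | G.Adj v u} := by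
  refine Eq.trans (sum_congr rfl fun v hv => ?_)
    (sum_card_bipartiteAbove_eq_sum_card_bipartiteBelow (r := G.Adj))
  rw [← G.card_neighborFinset_eq_degree]
  congr 1
  ext w
  simpa [bipartiteAbove] using fun hvw => ⟨v, hv, hvw⟩

theorem isBipartiteWith_of_nbhd_nbhd_subset (hconn : G.Connected) (hne : U.Nonempty)
    (hU : ∀ u ∈ U, ∀ v ∈ U, ¬G.Adj u v) (h : nbhd G (nbhd G U) ⊆ U) :
    G.IsBipartiteWith U (↑U)ᶜ := by
  obtain ⟨a, ha⟩ := hne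
  have hcover : ∀ v, v ∈ U ∨ v ∈ nbhd G U := fun v =>
    (hconn.preconnected a v).mem_of_adj_closed (S := {v | v ∈ U ∨ v ∈ nbhd G U}) (.inl ha)
      fun x hx y hxy => hx.elim (fun hxU => .inr (mem_nbhd.mpr ⟨x, hxU, hxy⟩))
        fun hxN => .inl (h (mem_nbhd.mpr ⟨x, hxN, hxy⟩))
  refine ⟨disjoint_compl_right, fun v w hvw => ?_⟩
  by_cases hv : v ∈ U
  · exact .inl ⟨hv, fun hw => hU v hv w hw hvw⟩
  · have hvN := (hcover v).resolve_left hv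
    exact .inr ⟨hv, h (mem_nbhd.mpr ⟨v, hvN, hvw⟩)⟩

theorem sum_degree_lt_sum_degree_nbhd (hconn : G.Connected) (hnb : ¬G.Colorable 2)
    (hF : IsFacet G U) : ∑ v ∈ U, G.degree v < ∑ u ∈ nbhd G U, G.degree u := by
  rw [sum_degree_eq_sum_card_filter_adj]
  have hle : ∀ u, #{v ∈ U | G.Adj v u} ≤ G.degree u := fun u =>
    G.card_neighborFinset_eq_degree u ▸ card_le_card (filter_adj_subset_neighborFinset u)
  refine sum_lt_sum (fun u _ => hle u) ?_
  by_contra! hall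
  refine hnb (isBipartiteWith_of_nbhd_nbhd_subset hconn hF.1 hF.2 fun w hw => ?_).isBipartite
  obtain ⟨u, hu, huw⟩ := mem_nbhd.mp hw
  have hfull : {v ∈ U | G.Adj v u} = G.neighborFinset u :=
    eq_of_subset_of_card_le (filter_adj_subset_neighborFinset u)
      (G.card_neighborFinset_eq_degree u ▸ hall u hu)
  have hw' : w ∈ {v ∈ U | G.Adj v u} := hfull ▸ (G.mem_neighborFinset u w).mpr huw
  exact (mem_filter.mp hw').1

theorem sum_le_sum_nbhd_of_forall_isFacet {μ : V → ℝ}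
    (hμ : ∀ F, IsFacet G F → ∑ v ∈ F, μ v < ∑ v ∈ nbhd G F, μ v)
    (hU : ∀ u ∈ U, ∀ v ∈ U, ¬G.Adj u v) : ∑ v ∈ U, μ v ≤ ∑ v ∈ nbhd G U, μ v := by
  rcases U.eq_empty_or_nonempty with rfl | hne
  · simp [nbhd]
  · exact (hμ U ⟨hne, hU⟩).le

theorem not_forall_isFacet_sum_lt_of_colorable_two [Nonempty V] (hbip : G.Colorable 2)
    {μ : V → ℝ} (hμ : ∀ v, 0 ≤ μ v) :
    ¬∀ F, IsFacet G F → ∑ v ∈ F, μ v < ∑ v ∈ nbhd G F, μ v := by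
  intro hlt
  obtain ⟨C⟩ := hbip
  obtain ⟨x⟩ := ‹Nonempty V›
  set A : Finset V := {v | C v = C x}
  have hA : ∀ u ∈ A, ∀ v ∈ A, ¬G.Adj u v := fun u hu v hv huv => by
    simp only [A, mem_filter, mem_univ, true_and] at hu hv
    exact C.valid huv (hu.trans hv.symm)
  have hAc : ∀ u ∈ Aᶜ, ∀ v ∈ Aᶜ, ¬G.Adj u v := fun u hu v hv huv => by
    simp only [A, mem_compl, mem_filter, mem_univ, true_and] at hu hv
    -- two colours in `Fin 2` that both differ from `C x` coincide
    exact C.valid huv (by omega)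
  have hmono : ∀ {S T : Finset V}, S ⊆ T → ∑ v ∈ S, μ v ≤ ∑ v ∈ T, μ v := fun hST =>
    sum_le_sum_of_subset_of_nonneg hST fun v _ _ => hμ v
  have hnbhdAc : nbhd G Aᶜ ⊆ A := by simpa using nbhd_subset_compl hAc
  refine lt_irrefl (∑ v ∈ A, μ v) ?_
  calc ∑ v ∈ A, μ v
      < ∑ v ∈ nbhd G A, μ v := hlt A ⟨⟨x, by simp [A]⟩, hA⟩
    _ ≤ ∑ v ∈ Aᶜ, μ v := hmono (nbhd_subset_compl hA)
    _ ≤ ∑ v ∈ nbhd G Aᶜ, μ v := sum_le_sum_nbhd_of_forall_isFacet hlt hAc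
    _ ≤ ∑ v ∈ A, μ v := hmono hnbhdAc

end Nbhd

theorem stmt_7_general {V : Type*} [Fintype V] [DecidableEq V] (G : SimpleGraph V)
    [DecidableRel G.Adj] (hconn : G.Connected) :
    ¬ G.Colorable 2 ↔
      ∃ μ : V → ℝ, (∀ v, 0 < μ v) ∧ (∑ v, μ v = 1) ∧
        ∀ F : Finset V, IsFacet G F → ∑ v ∈ F, μ v < ∑ v ∈ nbhd G F, μ v := by
  have : Nonempty V := hconn.nonempty
  constructor
  · intro hnb
    have : Nontrivial V := Fintype.one_lt_card_iff_nontrivial.mp <| by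
      by_contra! hle
      exact hnb (G.colorable_of_fintype.mono (by omega))
    have hdeg : ∀ v, (0 : ℝ) < G.degree v := fun v => by
      exact_mod_cast hconn.preconnected.degree_pos_of_nontrivial v
    set D : ℝ := ∑ v, (G.degree v : ℝ)
    have hD : 0 < D := sum_pos (fun v _ => hdeg v) univ_nonempty
    refine ⟨fun v => G.degree v / D, fun v => div_pos (hdeg v) hD,
      by rw [← sum_div, div_self hD.ne'], fun F hF => ?_⟩
    rw [← sum_div, ← sum_div, div_lt_div_iff_of_pos_right hD]
    exact_mod_cast sum_degree_lt_sum_degree_nbhd hconn hnb hF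
  · rintro ⟨μ, hpos, -, hlt⟩ hbip
    exact not_forall_isFacet_sum_lt_of_colorable_two hbip (fun v => (hpos v).le) hlt

theorem stmt_7 {V : Type*} [Fintype V] [DecidableEq V] (G : SimpleGraph V)
    [DecidableRel G.Adj] (hconn : G.Connected) (hcard : 2 ≤ Fintype.card V) :
    ¬ G.Colorable 2 ↔
      ∃ μ : V → ℝ, (∀ v, 0 < μ v) ∧ (∑ v, μ v = 1) ∧
        ∀ F : Finset V, IsFacet G F → ∑ v ∈ F, μ v < ∑ v ∈ nbhd G F, μ v :=
  stmt_7_general G hconn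
end

section
/- Let G be a non-bipartite connected finite simple graph, and consider the directed graph D with vertex set V ⊔ Ṽ (Ṽ a disjoint copy of V), arcs u → ṽ for each edge (u,v) of G, and arcs ũ → u for each u ∈ V. Then D is strongly connected. -/
/-- The arc relation of the directed graph `D`: arcs `u → ṽ` for each edge `(u,v)` of `G`,
and arcs `ũ → u` for each vertex `u` (here `inl` is `V` and `inr` is its copy `Ṽ`). -/
def dirStep {V : Type*} (G : SimpleGraph V) : V ⊕ V → V ⊕ V → Prop := fun x y =>
  (∃ u v, G.Adj u v ∧ x = Sum.inl u ∧ y = Sum.inr v) ∨ (∃ u, x = Sum.inr u ∧ y = Sum.inl u)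

/-!
A walk `u₀ ~ u₁ ~ ⋯ ~ uₙ` of `G` lifts to the path `u₀ → ũ₁ → u₁ → ⋯ → ũₙ → uₙ` of `D`, so
connectivity of `G` links all of `V` inside `D`. A copy `ũ` is left through its arc to `u` and
entered from any neighbour of `u`, so it only remains to see that `G` has no isolated vertex:
a graph that is not 2-colourable has an edge, hence at least two vertices, and a connected graph
on at least two vertices has no isolated vertex.
-/

open Relation SimpleGraph

section

variable {V : Type*} {G : SimpleGraph V}

lemma SimpleGraph.ne_bot_of_not_colorable {n : ℕ} (hn : 1 ≤ n) (h : ¬G.Colorable n) : G ≠ ⊥ :=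
  fun hbot ↦ h <| (colorable_one_iff.mpr hbot).mono hn

lemma reflTransGen_dirStep_inl_of_adj {u v : V} (h : G.Adj u v) :
    ReflTransGen (dirStep G) (.inl u) (.inl v) :=
  .head (.inl ⟨u, v, h, rfl, rfl⟩) (.single (.inr ⟨v, rfl, rfl⟩))

lemma reflTransGen_dirStep_inl_of_reachable {u v : V} (h : G.Reachable u v) :
    ReflTransGen (dirStep G) (.inl u) (.inl v) := by
  obtain ⟨w⟩ := h
  induction w with
  | nil => exact .refl
  | cons hadj _ ih => exact (reflTransGen_dirStep_inl_of_adj hadj).trans ih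

lemma reflTransGen_dirStep_of_preconnected (hG : G.Preconnected) (hnbr : ∀ v, ∃ w, G.Adj v w)
    (x y : V ⊕ V) : ReflTransGen (dirStep G) x y := by
  have leave : ∃ u, ReflTransGen (dirStep G) x (.inl u) := by
    rcases x with u | u
    · exact ⟨u, .refl⟩
    · exact ⟨u, .single (.inr ⟨u, rfl, rfl⟩)⟩
  have enter : ∃ v, ReflTransGen (dirStep G) (.inl v) y := by
    rcases y with v | v
    · exact ⟨v, .refl⟩
    · obtain ⟨w, hvw⟩ := hnbr v
      exact ⟨w, .single (.inl ⟨w, v, hvw.symm, rfl, rfl⟩)⟩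
  obtain ⟨u, hxu⟩ := leave
  obtain ⟨v, hvy⟩ := enter
  exact hxu.trans ((reflTransGen_dirStep_inl_of_reachable (hG u v)).trans hvy)

end

theorem stmt_14_general {V : Type*} (G : SimpleGraph V) (hconn : G.Connected)
    (hnonbip : ¬ G.Colorable 2) :
    ∀ x y : V ⊕ V, Relation.ReflTransGen (dirStep G) x y := by
  obtain ⟨a, b, hab⟩ := ne_bot_iff_exists_adj.mp (ne_bot_of_not_colorable one_le_two hnonbip)
  have : Nontrivial V := hab.nontrivial
  exact reflTransGen_dirStep_of_preconnected hconn.preconnected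
    hconn.preconnected.exists_adj_of_nontrivial

theorem stmt_14 {V : Type*} [Fintype V] (G : SimpleGraph V) (hconn : G.Connected)
    (hnonbip : ¬ G.Colorable 2) :
    ∀ x y : V ⊕ V, Relation.ReflTransGen (dirStep G) x y :=
  stmt_14_general G hconn hnonbip
end
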